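/- arXiv:2506.12297 — 4 statements merged into one kernel-verified Lean document; each statement's English description precedes it below -/
import Mathlib

section
/- Let r₁ = (r₁₁, r₁₂) and r₂ = (r₂₁, r₂₂) be two distinct points in ℝ². Then the 4×4 real matrix with rows (1,0,1,0), (0,1,0,1), (r₁₁, r₁₂, r₂₁, r₂₂), (−r₁₂, r₁₁, −r₂₂, r₂₁) is invertible. -/
set_option maxHeartbeats 1000000 in
theorem stmt_0 (r₁ r₂ : Fin 2 → ℝ) (h : r₁ ≠ r₂) :
    IsUnit (!![(1:ℝ), 0, 1, 0;
               0, 1, 0, 1;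
               r₁ 0, r₁ 1, r₂ 0, r₂ 1;
               -(r₁ 1), r₁ 0, -(r₂ 1), r₂ 0]) := by
  rw [Matrix.isUnit_iff_isUnit_det, isUnit_iff_ne_zero]
  have hdet : (!![(1:ℝ), 0, 1, 0;
               0, 1, 0, 1;
               r₁ 0, r₁ 1, r₂ 0, r₂ 1;
               -(r₁ 1), r₁ 0, -(r₂ 1), r₂ 0]).det
      = (r₂ 0 - r₁ 0)^2 + (r₂ 1 - r₁ 1)^2 := by
    have e : (Fin.succAbove 2 2 : Fin 4) = 3 := by decide
    simp [Matrix.det_succ_row_zero, Fin.sum_univ_succ, e]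
    ring
  rw [hdet]
  have h01 : r₁ 0 ≠ r₂ 0 ∨ r₁ 1 ≠ r₂ 1 := by
    by_contra hc
    push_neg at hc
    exact h (funext fun i => by fin_cases i <;> simp [hc.1, hc.2])
  rcases h01 with h' | h' <;> intro hz <;> apply h' <;>
    nlinarith [sq_nonneg (r₁ 0 - r₂ 0), sq_nonneg (r₁ 1 - r₂ 1)]
end

section
/- Fix n ≥ 2 and r : Fin n → ℝ² with all r i pairwise distinct. The span of { r, r′, 𝟙′, 𝟙″ } (with r′, 𝟙′, 𝟙″ as defined from r) is a 4-dimensional subspace of (Fin n → ℝ²). -/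
theorem stmt_8 (n : ℕ) (hn : 2 ≤ n) (r : Fin n → Fin 2 → ℝ)
    (hdist : Function.Injective r) :
    Module.finrank ℝ
      (Submodule.span ℝ
        ({r, fun i => ![-(r i 1), r i 0], fun _ => ![(1:ℝ), 0], fun _ => ![(0:ℝ), 1]} :
          Set (Fin n → Fin 2 → ℝ))) = 4 := by
  have h0 : (0:ℕ) < n := by omega
  have h1 : (1:ℕ) < n := by omega
  set i0 : Fin n := ⟨0, h0⟩ with hi0
  set i1 : Fin n := ⟨1, h1⟩ with hi1
  have hne : r i0 ≠ r i1 := by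
    intro h
    have := hdist h
    simp [hi0, hi1, Fin.ext_iff] at this
  set v : Fin 4 → (Fin n → Fin 2 → ℝ) :=
    ![r, fun i => ![-(r i 1), r i 0], fun _ => ![(1:ℝ),0], fun _ => ![(0:ℝ),1]] with hv
  have hrange : ({r, fun i => ![-(r i 1), r i 0], fun _ => ![(1:ℝ), 0], fun _ => ![(0:ℝ), 1]} :
          Set (Fin n → Fin 2 → ℝ)) = Set.range v := by
    ext x
    simp only [Set.mem_insert_iff, Set.mem_singleton_iff, Set.mem_range]
    constructor
    · rintro (h|h|h|h)
      · exact ⟨0, h.symm⟩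
      · exact ⟨1, h.symm⟩
      · exact ⟨2, h.symm⟩
      · exact ⟨3, h.symm⟩
    · rintro ⟨j, rfl⟩
      fin_cases j <;> simp [hv]
  have hxy : r i0 0 ≠ r i1 0 ∨ r i0 1 ≠ r i1 1 := by
    by_contra h
    push_neg at h
    exact hne (funext fun j => by fin_cases j <;> simp [h.1, h.2])
  have hpos : 0 < (r i0 0 - r i1 0)^2 + (r i0 1 - r i1 1)^2 := by
    rcases hxy with h|h
    · have : (r i0 0 - r i1 0) ≠ 0 := sub_ne_zero.mpr h
      nlinarith [sq_nonneg (r i0 1 - r i1 1), sq_pos_of_ne_zero this]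
    · have : (r i0 1 - r i1 1) ≠ 0 := sub_ne_zero.mpr h
      nlinarith [sq_nonneg (r i0 0 - r i1 0), sq_pos_of_ne_zero this]
  have hli : LinearIndependent ℝ v := by
    rw [Fintype.linearIndependent_iff]
    intro g hg
    have e0 := congrFun (congrFun hg i0) 0
    have e1 := congrFun (congrFun hg i0) 1
    have e2 := congrFun (congrFun hg i1) 0
    have e3 := congrFun (congrFun hg i1) 1
    simp [hv, Fin.sum_univ_four] at e0 e1 e2 e3
    set u := r i0 0 - r i1 0 with hu
    set w := r i0 1 - r i1 1 with hw
    have f1 : g 0 * u - g 1 * w = 0 := by simp [hu, hw]; nlinarith [e0, e2]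
    have f2 : g 0 * w + g 1 * u = 0 := by simp [hu, hw]; nlinarith [e1, e3]
    have ha : g 0 * (u^2 + w^2) = 0 := by
      have h : g 0 * (u^2 + w^2) = (g 0 * u - g 1 * w)*u + (g 0 * w + g 1 * u)*w := by ring
      rw [h, f1, f2]; ring
    have hb : g 1 * (u^2 + w^2) = 0 := by
      have h : g 1 * (u^2 + w^2) = (g 0 * w + g 1 * u)*u - (g 0 * u - g 1 * w)*w := by ring
      rw [h, f1, f2]; ring
    have ha0 : g 0 = 0 := by
      rcases mul_eq_zero.mp ha with h|h
      · exact h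
      · exact absurd h (ne_of_gt hpos)
    have hb0 : g 1 = 0 := by
      rcases mul_eq_zero.mp hb with h|h
      · exact h
      · exact absurd h (ne_of_gt hpos)
    have hc0 : g 2 = 0 := by rw [ha0, hb0] at e0; linarith
    have hd0 : g 3 = 0 := by rw [ha0, hb0] at e1; linarith
    intro j
    fin_cases j <;> assumption
  rw [hrange, finrank_span_eq_card hli]
  simp
end

section
/- Let n ≥ 2 and r : Fin n → ℝ² with all r i pairwise distinct. For each i define the 2×2 matrix S_{r_i} = [[(r i).1, −(r i).2], [(r i).2, (r i).1]], and let P(r) be the (2n)×4 real matrix whose i-th 2×4 block row is [S_{r_i} | I₂]. Then P(r) has full column rank, i.e., rank P(r) = 4. -/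
theorem stmt_9 (n : ℕ) (hn : 2 ≤ n) (r : Fin n → Fin 2 → ℝ)
    (hdist : Function.Injective r) :
    (Matrix.of fun (q : Fin n × Fin 2) (j : Fin 4) =>
        (!![r q.1 0, -(r q.1 1), 1, 0;
            r q.1 1,   r q.1 0,  0, 1] : Matrix (Fin 2) (Fin 4) ℝ) q.2 j).rank = 4 := by
  set M : Matrix (Fin n × Fin 2) (Fin 4) ℝ :=
    Matrix.of fun (q : Fin n × Fin 2) (j : Fin 4) =>
        (!![r q.1 0, -(r q.1 1), 1, 0;
            r q.1 1,   r q.1 0,  0, 1] : Matrix (Fin 2) (Fin 4) ℝ) q.2 j with hM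
  have hinj : Function.Injective M.mulVecLin := by
    rw [← LinearMap.ker_eq_bot, LinearMap.ker_eq_bot']
    intro v hv
    have key : ∀ i : Fin n, (r i 0 * v 0 - r i 1 * v 1 + v 2 = 0) ∧
        (r i 1 * v 0 + r i 0 * v 1 + v 3 = 0) := by
      intro i
      have h0 := congrFun hv (i, 0)
      have h1 := congrFun hv (i, 1)
      simp [hM, Matrix.mulVec, dotProduct, Fin.sum_univ_four] at h0 h1
      constructor <;> linarith
    obtain ⟨e1, e2⟩ := key ⟨0, by omega⟩
    obtain ⟨e3, e4⟩ := key ⟨1, by omega⟩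
    set x0 := r ⟨0, by omega⟩ 0
    set y0 := r ⟨0, by omega⟩ 1
    set x1 := r ⟨1, by omega⟩ 0
    set y1 := r ⟨1, by omega⟩ 1
    have hne : r (⟨0, by omega⟩ : Fin n) ≠ r (⟨1, by omega⟩ : Fin n) := by
      intro h
      have := hdist h
      simp [Fin.ext_iff] at this
    have hdiff : x0 ≠ x1 ∨ y0 ≠ y1 := by
      by_contra hc
      push_neg at hc
      exact hne (funext fun j => by fin_cases j <;> [exact hc.1; exact hc.2])
    have hsq : (x0 - x1)^2 + (y0 - y1)^2 > 0 := by
      rcases hdiff with h | h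
      · have hd : x0 - x1 ≠ 0 := sub_ne_zero.mpr h
        positivity
      · have hd : y0 - y1 ≠ 0 := sub_ne_zero.mpr h
        positivity
    have ha0 : ((x0 - x1)^2 + (y0 - y1)^2) * v 0 = 0 := by
      linear_combination (x0 - x1) * (e1 - e3) + (y0 - y1) * (e2 - e4)
    have hb0 : ((x0 - x1)^2 + (y0 - y1)^2) * v 1 = 0 := by
      linear_combination (-(y0 - y1)) * (e1 - e3) + (x0 - x1) * (e2 - e4)
    have ha : v 0 = 0 := (mul_eq_zero.mp ha0).resolve_left hsq.ne'
    have hb : v 1 = 0 := (mul_eq_zero.mp hb0).resolve_left hsq.ne'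
    have hc : v 2 = 0 := by
      have := e1; rw [ha, hb] at this; linarith
    have hd : v 3 = 0 := by
      have := e2; rw [ha, hb] at this; linarith
    funext j
    fin_cases j <;> simpa using (by assumption : _)
  rw [Matrix.rank, LinearMap.finrank_range_of_inj hinj]
  simp
end

section
/- Let r₁, r₃, r₄ ∈ ℝ² be pairwise distinct. Then the solution set of the linear system B₁ + B₃ + B₄ = 0, B₁ r₁ + B₃ r₃ + B₄ r₄ = 0, where each Bⱼ ranges over 2×2 matrices of the form [[a, −b], [b, a]], is a 2-dimensional ℝ-subspace of the space of triples (B₁, B₃, B₄). -/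
/-!
The matrices `[[a, -b], [b, a]]` are exactly the matrices of multiplication by `a + b i` on
`ℂ ≅ ℝ²`, and `B r` becomes the product of the corresponding complex numbers. The system therefore
reads `z₁ + z₃ + z₄ = 0`, `z₁ w₁ + z₃ w₃ + z₄ w₄ = 0` over `ℂ`; as `w₃ ≠ w₄` its solutions form the
complex line spanned by `(w₃ - w₄, w₄ - w₁, w₁ - w₃)`, a real plane. The same argument
works for the left regular representation of any field extension with a finite basis.
-/

open Matrix

theorem add_add_eq_zero_and_weighted_sum_eq_zero_iff {K : Type*} [Field K]
    {w₁ w₃ w₄ : K} (h34 : w₃ ≠ w₄) {z₁ z₃ z₄ : K} :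
    z₁ + z₃ + z₄ = 0 ∧ z₁ * w₁ + z₃ * w₃ + z₄ * w₄ = 0 ↔
      ∃ c, c * (w₃ - w₄) = z₁ ∧ c * (w₄ - w₁) = z₃ ∧ c * (w₁ - w₃) = z₄ := by
  have hw : w₃ - w₄ ≠ 0 := sub_ne_zero.mpr h34
  constructor
  · rintro ⟨hsum, hmom⟩
    refine ⟨z₁ / (w₃ - w₄), div_mul_cancel₀ z₁ hw, ?_, ?_⟩
    · rw [div_mul_eq_mul_div, div_eq_iff hw]
      linear_combination w₄ * hsum - hmom
    · rw [div_mul_eq_mul_div, div_eq_iff hw]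
      linear_combination hmom - w₃ * hsum
  · rintro ⟨c, rfl, rfl, rfl⟩
    constructor <;> ring

namespace Algebra

variable {K L ι : Type*} [Field K] [Field L] [Algebra K L] [Fintype ι] [DecidableEq ι]
  (b : Module.Basis ι K L)

noncomputable def leftMulMatrixTriple (w₁ w₃ w₄ : L) :
    L →ₗ[K] Matrix ι ι K × Matrix ι ι K × Matrix ι ι K :=
  let φ := (leftMulMatrix b).toLinearMap
  (φ ∘ₗ LinearMap.mulRight K (w₃ - w₄)).prod
    ((φ ∘ₗ LinearMap.mulRight K (w₄ - w₁)).prod (φ ∘ₗ LinearMap.mulRight K (w₁ - w₃)))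

theorem leftMulMatrixTriple_injective {w₁ w₃ w₄ : L} (h34 : w₃ ≠ w₄) :
    Function.Injective (leftMulMatrixTriple b w₁ w₃ w₄) := by
  rw [← LinearMap.ker_eq_bot, LinearMap.ker_eq_bot']
  intro c hc
  have h : leftMulMatrix b (c * (w₃ - w₄)) = leftMulMatrix b 0 := by
    rw [map_zero]; exact congrArg Prod.fst hc
  simpa [sub_eq_zero, h34] using leftMulMatrix_injective b h

theorem mem_range_leftMulMatrixTriple_iff {w₁ w₃ w₄ : L} (h34 : w₃ ≠ w₄)
    (T : Matrix ι ι K × Matrix ι ι K × Matrix ι ι K) :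
    T ∈ LinearMap.range (leftMulMatrixTriple b w₁ w₃ w₄) ↔
      T.1 ∈ Set.range (leftMulMatrix b) ∧ T.2.1 ∈ Set.range (leftMulMatrix b) ∧
        T.2.2 ∈ Set.range (leftMulMatrix b) ∧ T.1 + T.2.1 + T.2.2 = 0 ∧
        T.1 *ᵥ b.repr w₁ + T.2.1 *ᵥ b.repr w₃ + T.2.2 *ᵥ b.repr w₄ = 0 := by
  have hsystem : ∀ z₁ z₃ z₄ : L,
      leftMulMatrix b z₁ + leftMulMatrix b z₃ + leftMulMatrix b z₄ = 0 ∧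
        leftMulMatrix b z₁ *ᵥ b.repr w₁ + leftMulMatrix b z₃ *ᵥ b.repr w₃ +
          leftMulMatrix b z₄ *ᵥ b.repr w₄ = 0 ↔
      z₁ + z₃ + z₄ = 0 ∧ z₁ * w₁ + z₃ * w₃ + z₄ * w₄ = 0 := by
    intro z₁ z₃ z₄
    simp only [leftMulMatrix_mulVec_repr, ← map_add, ← Finsupp.coe_add, Finsupp.coe_eq_zero,
      LinearEquiv.map_eq_zero_iff, map_eq_zero_iff _ (leftMulMatrix_injective b)]
  constructor
  · rintro ⟨c, rfl⟩
    exact ⟨⟨_, rfl⟩, ⟨_, rfl⟩, ⟨_, rfl⟩,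
      (hsystem _ _ _).mpr ((add_add_eq_zero_and_weighted_sum_eq_zero_iff h34).mpr ⟨c, rfl, rfl, rfl⟩)⟩
  · obtain ⟨B₁, B₃, B₄⟩ := T
    rintro ⟨⟨z₁, rfl⟩, ⟨z₃, rfl⟩, ⟨z₄, rfl⟩, hsum, hmom⟩
    obtain ⟨c, rfl, rfl, rfl⟩ :=
      (add_add_eq_zero_and_weighted_sum_eq_zero_iff h34).mp ((hsystem _ _ _).mp ⟨hsum, hmom⟩)
    exact ⟨c, rfl⟩

end Algebra

theorem Complex.mem_range_leftMulMatrix_basisOneI_iff (M : Matrix (Fin 2) (Fin 2) ℝ) :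
    M ∈ Set.range (Algebra.leftMulMatrix Complex.basisOneI) ↔ ∃ a b : ℝ, M = !![a, -b; b, a] := by
  simp only [Set.mem_range, Algebra.leftMulMatrix_complex]
  constructor
  · rintro ⟨z, rfl⟩
    exact ⟨z.re, z.im, rfl⟩
  · rintro ⟨a, b, rfl⟩
    exact ⟨⟨a, b⟩, rfl⟩

theorem stmt_12_general (r₁ r₃ r₄ : Fin 2 → ℝ)
    (h34 : r₃ ≠ r₄) :
    ∃ W : Submodule ℝ
        (Matrix (Fin 2) (Fin 2) ℝ × Matrix (Fin 2) (Fin 2) ℝ × Matrix (Fin 2) (Fin 2) ℝ),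
      (↑W : Set (Matrix (Fin 2) (Fin 2) ℝ × Matrix (Fin 2) (Fin 2) ℝ × Matrix (Fin 2) (Fin 2) ℝ)) =
        {T : Matrix (Fin 2) (Fin 2) ℝ × Matrix (Fin 2) (Fin 2) ℝ × Matrix (Fin 2) (Fin 2) ℝ |
             (∃ a b : ℝ, T.1 = !![a, -b; b, a]) ∧
             (∃ a b : ℝ, T.2.1 = !![a, -b; b, a]) ∧
             (∃ a b : ℝ, T.2.2 = !![a, -b; b, a]) ∧
             T.1 + T.2.1 + T.2.2 = 0 ∧
             T.1.mulVec r₁ + T.2.1.mulVec r₃ + T.2.2.mulVec r₄ = 0} ∧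
      Module.finrank ℝ W = 2 := by
  let e := Complex.basisOneI.equivFun
  have hrepr (r : Fin 2 → ℝ) : ⇑(Complex.basisOneI.repr (e.symm r)) = r := e.apply_symm_apply r
  have h34' : e.symm r₃ ≠ e.symm r₄ := e.symm.injective.ne h34
  refine ⟨LinearMap.range (Algebra.leftMulMatrixTriple Complex.basisOneI
    (e.symm r₁) (e.symm r₃) (e.symm r₄)), ?_, ?_⟩
  · ext T
    simp only [SetLike.mem_coe, Algebra.mem_range_leftMulMatrixTriple_iff _ h34', hrepr,
      Complex.mem_range_leftMulMatrix_basisOneI_iff, Set.mem_ofPred_eq]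
  · rw [LinearMap.finrank_range_of_inj (Algebra.leftMulMatrixTriple_injective _ h34'),
      Complex.finrank_real_complex]

theorem stmt_12 (r₁ r₃ r₄ : Fin 2 → ℝ)
    (h13 : r₁ ≠ r₃) (h14 : r₁ ≠ r₄) (h34 : r₃ ≠ r₄) :
    ∃ W : Submodule ℝ
        (Matrix (Fin 2) (Fin 2) ℝ × Matrix (Fin 2) (Fin 2) ℝ × Matrix (Fin 2) (Fin 2) ℝ),
      (↑W : Set (Matrix (Fin 2) (Fin 2) ℝ × Matrix (Fin 2) (Fin 2) ℝ × Matrix (Fin 2) (Fin 2) ℝ)) =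
        {T : Matrix (Fin 2) (Fin 2) ℝ × Matrix (Fin 2) (Fin 2) ℝ × Matrix (Fin 2) (Fin 2) ℝ |
             (∃ a b : ℝ, T.1 = !![a, -b; b, a]) ∧
             (∃ a b : ℝ, T.2.1 = !![a, -b; b, a]) ∧
             (∃ a b : ℝ, T.2.2 = !![a, -b; b, a]) ∧
             T.1 + T.2.1 + T.2.2 = 0 ∧
             T.1.mulVec r₁ + T.2.1.mulVec r₃ + T.2.2.mulVec r₄ = 0} ∧
      Module.finrank ℝ W = 2 :=
  stmt_12_general r₁ r₃ r₄ h34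
end
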